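/- arXiv:1402.2125 — 2 statements merged into one kernel-verified Lean document; each statement's English description precedes it below -/
import Mathlib

section
/- In the setting of a special region, let x_k denote the unique point of Λ ∩ H_k ∩ φ^{-1}(A). Then for each k there exists a subset I_k ⊆ {1, …, s} such that x_{k+1} = x_k + v_{s+1} − ∑_{i∈I_k} v_i; consequently φ(x_{k+1}) ≡ φ(x_k) + φ(v_{s+1}) modulo the lattice M generated by φ(v_1), …, φ(v_s). -/
open MeasureTheory

noncomputable section

/-- Embedding of an integer vector into `ℝ^s`. -/
def intVec (s : ℕ) (m : Fin s → ℤ) : Fin s → ℝ := fun i => (m i : ℝ)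

/-- `y` belongs to `A` modulo `ℤ^s`. -/
def ModMem (s : ℕ) (y : Fin s → ℝ) (A : Set (Fin s → ℝ)) : Prop :=
  ∃ m : Fin s → ℤ, y + intVec s m ∈ A

/-- `α` is totally irrational: `1, α 0, …, α (s-1)` are `ℚ`-linearly independent. -/
def TotallyIrrational (s : ℕ) (α : Fin s → ℝ) : Prop :=
  ∀ (m : Fin s → ℤ) (n : ℤ), (∑ i, (m i : ℝ) * α i) + (n : ℝ) = 0 → m = 0 ∧ n = 0

/-- `A ⊆ 𝕋^s` (given by a lift in `ℝ^s`) is a bounded remainder set for the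
rotation by `α`. -/
def IsBRS (s : ℕ) (α : Fin s → ℝ) (A : Set (Fin s → ℝ)) : Prop :=
  ∃ C : ℝ, ∀ (x : Fin s → ℝ) (N : ℕ),
    |(∑ n ∈ Finset.range N,
        Set.indicator {y : Fin s → ℝ | ModMem s y A} (fun _ => (1:ℝ)) (x + n • α))
      - N * (volume A).toReal| ≤ C

end


noncomputable section

/-- The vector `α' = (α, 1) ∈ ℝ^{s+1}`. -/
def alphaExt (s : ℕ) (α : Fin s → ℝ) : Fin (s+1) → ℝ := Fin.snoc α 1

/-- The lattice `Λ ⊆ ℝ^{s+1}` generated by `(α,1)` and `e_1, …, e_s`. -/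
def Lam (s : ℕ) (α : Fin s → ℝ) : Set (Fin (s+1) → ℝ) :=
  {x | ∃ (n : ℤ) (a : Fin s → ℤ),
    x = (n : ℝ) • alphaExt s α + Fin.snoc (fun i => (a i : ℝ)) 0}

/-- Projection `φ : ℝ^{s+1} → ℝ^s` to the first `s` coordinates. -/
def phiProj (s : ℕ) (x : Fin (s+1) → ℝ) : Fin s → ℝ := fun i => x i.castSucc

/-- Half-open parallelotope generated by `v_1, …, v_m`. -/
def Ptope {m : ℕ} {E : Type*} [AddCommMonoid E] [Module ℝ E]
    (v : Fin m → E) : Set E :=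
  {x | ∃ t : Fin m → ℝ, (∀ i, 0 ≤ t i ∧ t i < 1) ∧ x = ∑ i, t i • v i}

/-- The set of `ℤ`-linear combinations of a family of vectors. -/
def zSpanSet {m : ℕ} {E : Type*} [AddCommMonoid E] [Module ℝ E]
    (v : Fin m → E) : Set E :=
  {x | ∃ c : Fin m → ℤ, x = ∑ i, (c i : ℝ) • v i}

/-- The special region associated to a basis `v` of `Λ`:
`A = φ(P(v_1,…,v_s))` (condition (S1)). -/
def specialRegionOf (s : ℕ) (v : Fin (s+1) → (Fin (s+1) → ℝ)) : Set (Fin s → ℝ) :=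
  (phiProj s) '' (Ptope (fun i : Fin s => v i.castSucc))

/-- Conditions (S2)-(S4) making `v` a basis defining a special region for `α`. -/
def IsSpecialBasis (s : ℕ) (α : Fin s → ℝ) (v : Fin (s+1) → (Fin (s+1) → ℝ)) : Prop :=
  (phiProj s (v (Fin.last s)) ∈ specialRegionOf s v) ∧
  (zSpanSet v = Lam s α) ∧
  (∀ I : Finset (Fin s),
    0 < v (Fin.last s) (Fin.last s) - ∑ i ∈ I, v i.castSucc (Fin.last s))

/-- `A` is a special region for `α`. -/
def IsSpecialRegion (s : ℕ) (α : Fin s → ℝ) (A : Set (Fin s → ℝ)) : Prop :=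
  ∃ v : Fin (s+1) → (Fin (s+1) → ℝ), IsSpecialBasis s α v ∧ A = specialRegionOf s v

/-- The affine hyperplane `H_k = span(v_1,…,v_s) + k v_{s+1}`. -/
def Hplane (s : ℕ) (v : Fin (s+1) → (Fin (s+1) → ℝ)) (k : ℤ) : Set (Fin (s+1) → ℝ) :=
  {x | ∃ c : Fin s → ℝ, x = (∑ i, c i • v i.castSucc) + (k : ℝ) • v (Fin.last s)}

end

/-!
Since `v` is a basis of `Λ` and `x_k ∈ H_k`, `x_k = ∑ c_i v_i + k v_{s+1}` with `c ∈ ℤ^s`, so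
`x_{k+1} = x_k + v_{s+1} + ∑ d_i v_i` with `d ∈ ℤ^s`. Projecting, `φ(x_k)`, `φ(x_{k+1})` and
`φ(v_{s+1})` all lie in the half-open parallelotope spanned by the `φ(v_i)`, which are linearly
independent: `ker φ` is the line through `e_{s+1}`, and it misses `span(v_1, …, v_s)` because
`φ(v_{s+1}) ∈ A` while `v_{s+1} ∉ span(v_1, …, v_s)`. Comparing coordinates gives
`d_i ∈ (-2, 1) ∩ ℤ = {-1, 0}`, and `I_k = {i | d_i = -1}`.
-/

section LinearAlgebra

open Submodule

variable {K E F : Type*} [Field K] [AddCommGroup E] [Module K E] [AddCommGroup F] [Module K F]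

theorem eq_of_add_smul_eq_add_smul {W : Submodule K E} {a w₁ w₂ : E} {p q : K}
    (ha : a ∉ W) (hw₁ : w₁ ∈ W) (hw₂ : w₂ ∈ W) (h : w₁ + p • a = w₂ + q • a) : p = q := by
  by_contra hpq
  have hmem : (p - q) • a ∈ W := by
    rw [sub_smul, show p • a - q • a = w₂ - w₁ by linear_combination (norm := module) h]
    exact sub_mem hw₂ hw₁
  exact ha ((W.smul_mem_iff (sub_ne_zero.mpr hpq)).mp hmem)

/-- If `f` has at most one-dimensional kernel and `f a` is hit from `span (range u)` while `a` is
not in it, the kernel cannot meet `span (range u)`: otherwise it would lie inside it, and so would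
`a`. -/
theorem linearIndependent_comp_of_ker_le_span_singleton {ι : Type*} {u : ι → E} {a z : E}
    {f : E →ₗ[K] F} (hu : LinearIndependent K u) (ha : a ∉ span K (Set.range u))
    (hfa : f a ∈ f '' span K (Set.range u)) (hker : LinearMap.ker f ≤ K ∙ z) :
    LinearIndependent K (f ∘ u) := by
  refine hu.map (Disjoint.mono_right hker (disjoint_span_singleton.mpr fun hz => ?_))
  obtain ⟨w, hw, hfw⟩ := hfa
  have hker_le : LinearMap.ker f ≤ span K (Set.range u) :=
    hker.trans ((span_singleton_le_iff_mem _ _).mpr hz)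
  have hdiff : a - w ∈ span K (Set.range u) :=
    hker_le (by rw [LinearMap.mem_ker, map_sub, hfw, sub_self])
  exact absurd (by simpa using add_mem hdiff hw) ha

end LinearAlgebra

section Parallelotope

open Submodule

variable {m : ℕ} {E F : Type*} [AddCommGroup E] [Module ℝ E] [AddCommGroup F] [Module ℝ F]

theorem Ptope_subset_span (w : Fin m → E) : Ptope w ⊆ span ℝ (Set.range w) := by
  rintro _ ⟨t, -, rfl⟩
  exact sum_mem fun i _ => smul_mem _ _ (subset_span ⟨i, rfl⟩)

theorem zSpanSet_subset_span (w : Fin m → E) : zSpanSet w ⊆ span ℝ (Set.range w) := by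
  rintro _ ⟨c, rfl⟩
  exact sum_mem fun i _ => smul_mem _ _ (subset_span ⟨i, rfl⟩)

theorem image_Ptope (f : E →ₗ[ℝ] F) (w : Fin m → E) : f '' Ptope w = Ptope (f ∘ w) := by
  ext y
  constructor
  · rintro ⟨_, ⟨t, ht, rfl⟩, rfl⟩
    exact ⟨t, ht, by simp⟩
  · rintro ⟨t, ht, rfl⟩
    exact ⟨_, ⟨t, ht, rfl⟩, by simp⟩

/-- Coefficients in `P(w)` lie in `[0, 1)`, so those of `q - p - r` lie in `(-2, 1)`. -/
theorem int_coeff_eq_neg_one_or_zero_of_mem_Ptope {w : Fin m → E} (hw : LinearIndependent ℝ w)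
    {p q r : E} (hp : p ∈ Ptope w) (hq : q ∈ Ptope w) (hr : r ∈ Ptope w) {d : Fin m → ℤ}
    (h : q = p + r + ∑ i, (d i : ℝ) • w i) (i : Fin m) : d i = -1 ∨ d i = 0 := by
  obtain ⟨tp, htp, rfl⟩ := hp
  obtain ⟨tq, htq, rfl⟩ := hq
  obtain ⟨tr, htr, rfl⟩ := hr
  have hcoeff : tq i = tp i + tr i + d i := by
    refine Fintype.linearIndependent_iffₛ.mp hw _ (fun j => tp j + tr j + d j) ?_ i
    simp only [h, add_smul, Finset.sum_add_distrib]
  have hlo : (-2 : ℝ) < d i := by linarith [htp i, htq i, htr i]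
  have hhi : (d i : ℝ) < 1 := by linarith [htp i, htq i, htr i]
  have : -2 < d i ∧ d i < 1 := ⟨by exact_mod_cast hlo, by exact_mod_cast hhi⟩
  omega

theorem sum_int_smul_eq_neg_sum_filter {d : Fin m → ℤ} (hd : ∀ i, d i = -1 ∨ d i = 0)
    (w : Fin m → E) : ∑ i, (d i : ℝ) • w i = -∑ i with d i = -1, w i := by
  rw [Finset.sum_filter, ← Finset.sum_neg_distrib]
  refine Finset.sum_congr rfl fun i _ => ?_
  rcases hd i with h | h <;> simp [h]

end Parallelotope

section SpecialBasis

open Submodule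

variable {s : ℕ}

def phiProjLinear (s : ℕ) : (Fin (s+1) → ℝ) →ₗ[ℝ] (Fin s → ℝ) :=
  LinearMap.funLeft ℝ ℝ Fin.castSucc

theorem coe_phiProjLinear : ⇑(phiProjLinear s) = phiProj s := rfl

theorem ker_phiProjLinear_le :
    LinearMap.ker (phiProjLinear s) ≤ ℝ ∙ (Pi.single (Fin.last s) 1 : Fin (s+1) → ℝ) := by
  intro y hy
  refine mem_span_singleton.mpr ⟨y (Fin.last s), funext fun j => ?_⟩
  induction j using Fin.lastCases with
  | last => simp
  | cast j =>
    have hj : y j.castSucc = 0 := congrFun hy j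
    simp [hj, (Fin.castSucc_lt_last j).ne]

theorem span_Lam (α : Fin s → ℝ) : span ℝ (Lam s α) = ⊤ := by
  have hcast : ∀ i : Fin s, (Pi.single i.castSucc 1 : Fin (s+1) → ℝ) ∈ Lam s α := fun i =>
    ⟨0, Pi.single i 1, funext fun j => by
      induction j using Fin.lastCases with
      | last => simp [(Fin.castSucc_lt_last i).ne']
      | cast j => simp [Pi.single_apply]⟩
  have halpha : alphaExt s α ∈ Lam s α :=
    ⟨1, 0, funext fun j => by induction j using Fin.lastCases <;> simp⟩
  have hlast : (Pi.single (Fin.last s) 1 : Fin (s+1) → ℝ)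
      = alphaExt s α - ∑ i, α i • Pi.single i.castSucc 1 := by
    funext j
    induction j using Fin.lastCases with
    | last => simp [alphaExt, Finset.sum_apply, fun i : Fin s => (Fin.castSucc_lt_last i).ne]
    | cast j => simp [alphaExt, Finset.sum_apply, Pi.single_apply, (Fin.castSucc_lt_last j).ne]
  rw [eq_top_iff, ← (Pi.basisFun ℝ (Fin (s+1))).span_eq, span_le]
  rintro _ ⟨j, rfl⟩
  rw [Pi.basisFun_apply]
  induction j using Fin.lastCases with
  | last =>
    rw [hlast]
    exact sub_mem (subset_span halpha) (sum_mem fun i _ => smul_mem _ _ (subset_span (hcast i)))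
  | cast j => exact subset_span (hcast j)

theorem specialRegionOf_eq_Ptope (v : Fin (s+1) → (Fin (s+1) → ℝ)) :
    specialRegionOf s v = Ptope fun i : Fin s => phiProj s (v i.castSucc) :=
  image_Ptope (phiProjLinear s) _

theorem linearIndependent_of_zSpanSet_eq_Lam {α : Fin s → ℝ} {v : Fin (s+1) → (Fin (s+1) → ℝ)}
    (hv : zSpanSet v = Lam s α) : LinearIndependent ℝ v := by
  refine linearIndependent_of_top_le_span_of_card_eq_finrank ?_ (by simp)
  rw [← span_Lam α, ← hv, span_le]
  exact zSpanSet_subset_span v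

theorem last_notMem_span_castSucc {v : Fin (s+1) → (Fin (s+1) → ℝ)} (hv : LinearIndependent ℝ v) :
    v (Fin.last s) ∉ span ℝ (Set.range fun i : Fin s => v i.castSucc) :=
  (linearIndependent_finSnoc.mp (by rwa [← Fin.init_def, Fin.snoc_init_self])).2

theorem exists_int_coeffs_of_mem_Hplane {v : Fin (s+1) → (Fin (s+1) → ℝ)}
    (hv : LinearIndependent ℝ v) {x : Fin (s+1) → ℝ} {k : ℤ} (hxΛ : x ∈ zSpanSet v)
    (hxH : x ∈ Hplane s v k) :
    ∃ c : Fin s → ℤ, x = ∑ i, (c i : ℝ) • v i.castSucc + (k : ℝ) • v (Fin.last s) := by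
  obtain ⟨b, hb⟩ := hxΛ
  obtain ⟨c, hc⟩ := hxH
  rw [Fin.sum_univ_castSucc] at hb
  have hlast : (b (Fin.last s) : ℝ) = k :=
    eq_of_add_smul_eq_add_smul (last_notMem_span_castSucc hv)
      (sum_mem fun i _ => smul_mem _ _ (subset_span ⟨i, rfl⟩))
      (sum_mem fun i _ => smul_mem _ _ (subset_span ⟨i, rfl⟩)) (hb.symm.trans hc)
  exact ⟨fun i => b i.castSucc, by rw [hb, hlast]⟩

theorem linearIndependent_phiProj_of_mem_specialRegionOf {v : Fin (s+1) → (Fin (s+1) → ℝ)}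
    (hv : LinearIndependent ℝ v) (hlast : phiProj s (v (Fin.last s)) ∈ specialRegionOf s v) :
    LinearIndependent ℝ fun i : Fin s => phiProj s (v i.castSucc) := by
  obtain ⟨y, hy, hφy⟩ := hlast
  exact linearIndependent_comp_of_ker_le_span_singleton (f := phiProjLinear s)
    (hv.comp _ (Fin.castSucc_injective s)) (last_notMem_span_castSucc hv)
    ⟨y, Ptope_subset_span _ hy, hφy⟩ ker_phiProjLinear_le

end SpecialBasis

theorem successive_points_differ_by_v_last_minus_subset_sum_general
    (s : ℕ) (α : Fin s → ℝ)
    (v : Fin (s+1) → (Fin (s+1) → ℝ)) (hv : IsSpecialBasis s α v)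
    (x : ℤ → (Fin (s+1) → ℝ))
    (hx : ∀ k : ℤ, x k ∈ Lam s α ∧ x k ∈ Hplane s v k ∧
      phiProj s (x k) ∈ specialRegionOf s v) :
    ∀ k : ℤ, ∃ I : Finset (Fin s),
      x (k+1) = x k + v (Fin.last s) - ∑ i ∈ I, v i.castSucc ∧
      phiProj s (x (k+1)) - (phiProj s (x k) + phiProj s (v (Fin.last s)))
        ∈ zSpanSet (fun i : Fin s => phiProj s (v i.castSucc)) := by
  obtain ⟨hvA, hvΛ, -⟩ := hv
  intro k
  obtain ⟨hΛ, hH, hA⟩ := hx k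
  obtain ⟨hΛ', hH', hA'⟩ := hx (k+1)
  have hli := linearIndependent_of_zSpanSet_eq_Lam hvΛ
  rw [← hvΛ] at hΛ hΛ'
  obtain ⟨c, hc⟩ := exists_int_coeffs_of_mem_Hplane hli hΛ hH
  obtain ⟨c', hc'⟩ := exists_int_coeffs_of_mem_Hplane hli hΛ' hH'
  set d := c' - c
  have hstep : x (k+1) = x k + v (Fin.last s) + ∑ i, (d i : ℝ) • v i.castSucc := by
    simp only [hc, hc', d, Pi.sub_apply, Int.cast_sub, sub_smul, Finset.sum_sub_distrib]
    push_cast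
    module
  have hφstep : phiProj s (x (k+1)) = phiProj s (x k) + phiProj s (v (Fin.last s))
      + ∑ i, (d i : ℝ) • phiProj s (v i.castSucc) := by
    simp [hstep, ← coe_phiProjLinear, map_add, map_sum, map_smul]
  have hφli := linearIndependent_phiProj_of_mem_specialRegionOf hli hvA
  rw [specialRegionOf_eq_Ptope] at hA hA' hvA
  have hd := int_coeff_eq_neg_one_or_zero_of_mem_Ptope hφli hA hA' hvA hφstep
  refine ⟨({i | d i = -1} : Finset (Fin s)), ?_, d, ?_⟩
  · rw [hstep, sum_int_smul_eq_neg_sum_filter hd]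
    abel
  · rw [hφstep]
    abel

/-- With `x k` the unique point of `Λ ∩ H_k ∩ φ^{-1}(A)`, there is
`I_k ⊆ {1,…,s}` with `x_{k+1} = x_k + v_{s+1} − ∑_{i∈I_k} v_i`; consequently
`φ(x_{k+1}) ≡ φ(x_k) + φ(v_{s+1})` modulo the lattice `M` generated by
`φ(v_1), …, φ(v_s)`. -/
theorem successive_points_differ_by_v_last_minus_subset_sum
    (s : ℕ) (α : Fin s → ℝ) (hα : TotallyIrrational s α)
    (v : Fin (s+1) → (Fin (s+1) → ℝ)) (hv : IsSpecialBasis s α v)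
    (x : ℤ → (Fin (s+1) → ℝ))
    (hx : ∀ k : ℤ, x k ∈ Lam s α ∧ x k ∈ Hplane s v k ∧
      phiProj s (x k) ∈ specialRegionOf s v) :
    ∀ k : ℤ, ∃ I : Finset (Fin s),
      x (k+1) = x k + v (Fin.last s) - ∑ i ∈ I, v i.castSucc ∧
      phiProj s (x (k+1)) - (phiProj s (x k) + phiProj s (v (Fin.last s)))
        ∈ zSpanSet (fun i : Fin s => phiProj s (v i.castSucc)) :=
  successive_points_differ_by_v_last_minus_subset_sum_general s α v hv x hx
end

section
/- In the setting of a special region, with x_k the unique point of Λ ∩ H_k ∩ φ^{-1}(A), the last coordinates are strictly increasing: φ_{s+1}(x_{k+1}) > φ_{s+1}(x_k) for all k ∈ ℤ. -/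
open MeasureTheory

/-!
Write `x_k = ∑ m_i v_i + k v_{s+1}` with `m_i ∈ ℤ`. Total irrationality makes `φ(v_1), …, φ(v_s)`
linearly independent, so with `φ(v_{s+1}) = φ(∑ u_i v_i)`, `u ∈ [0,1)^s`, the condition
`φ(x_k) ∈ A` says exactly `m_i + k u_i ∈ [0,1)`. Comparing `k` with `k + 1` gives
`x_{k+1} - x_k = v_{s+1} - ∑_{i ∈ I} v_i` for some `I`, whose last coordinate is positive by (S4).
-/

noncomputable section

lemma Int.eq_zero_or_eq_neg_one_of_eq_sub_sub {a b u : ℝ} {d : ℤ}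
    (ha : a ∈ Set.Ico (0 : ℝ) 1) (hb : b ∈ Set.Ico (0 : ℝ) 1) (hu : u ∈ Set.Ico (0 : ℝ) 1)
    (hd : (d : ℝ) = b - a - u) : d = 0 ∨ d = -1 := by
  have hlt : (d : ℝ) < 1 := by linarith [ha.1, hb.2, hu.1]
  have hgt : (-2 : ℝ) < d := by linarith [ha.2, hb.1, hu.2]
  have : d < 1 := by exact_mod_cast hlt
  have : -2 < d := by exact_mod_cast hgt
  omega

lemma Finset.sum_intCast_mul_eq_neg_sum_filter {ι R : Type*} [Ring R] (S : Finset ι)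
    (d : ι → ℤ) (a : ι → R) (hd : ∀ i ∈ S, d i = 0 ∨ d i = -1) :
    ∑ i ∈ S, (d i : R) * a i = -∑ i ∈ S.filter (d · = -1), a i := by
  rw [Finset.sum_filter, ← Finset.sum_neg_distrib]
  refine Finset.sum_congr rfl fun i hi => ?_
  rcases hd i hi with h | h <;> simp [h]

lemma phiProj_eq_funLeft (s : ℕ) (x : Fin (s+1) → ℝ) :
    phiProj s x = LinearMap.funLeft ℝ ℝ Fin.castSucc x :=
  rfl

lemma single_castSucc_mem_Lam (s : ℕ) (α : Fin s → ℝ) (j : Fin s) :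
    (Pi.single j.castSucc 1 : Fin (s+1) → ℝ) ∈ Lam s α := by
  refine ⟨0, Pi.single j 1, funext fun i => ?_⟩
  refine Fin.lastCases ?_ (fun i => ?_) i
  · simp
  · simp [Pi.single_apply, Fin.castSucc_inj]

lemma alphaExt_mem_Lam (s : ℕ) (α : Fin s → ℝ) : alphaExt s α ∈ Lam s α :=
  ⟨1, 0, funext fun i => Fin.lastCases (by simp) (fun i => by simp) i⟩

lemma single_last_eq_alphaExt_sub (s : ℕ) (α : Fin s → ℝ) :
    (Pi.single (Fin.last s) 1 : Fin (s+1) → ℝ)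
      = alphaExt s α - ∑ j, α j • (Pi.single j.castSucc 1 : Fin (s+1) → ℝ) := by
  funext i
  refine Fin.lastCases ?_ (fun i => ?_) i
  · simp [alphaExt, Finset.sum_apply]
  · simp [alphaExt, Finset.sum_apply, Pi.single_apply, Fin.castSucc_inj,
      (Fin.castSucc_lt_last i).ne]

lemma span_Lam_eq_top (s : ℕ) (α : Fin s → ℝ) : Submodule.span ℝ (Lam s α) = ⊤ := by
  have hsingle : ∀ j, (Pi.single j 1 : Fin (s+1) → ℝ) ∈ Submodule.span ℝ (Lam s α) := by
    refine Fin.lastCases ?_ fun j => Submodule.subset_span (single_castSucc_mem_Lam s α j)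
    rw [single_last_eq_alphaExt_sub s α]
    exact Submodule.sub_mem _ (Submodule.subset_span (alphaExt_mem_Lam s α))
      (Submodule.sum_mem _ fun j _ =>
        Submodule.smul_mem _ _ (Submodule.subset_span (single_castSucc_mem_Lam s α j)))
  rw [eq_top_iff, ← (Pi.basisFun ℝ (Fin (s+1))).span_eq, Submodule.span_le]
  rintro _ ⟨j, rfl⟩
  simpa using hsingle j

/-- Since `e_{s+1} = (α, 1) - ∑ α_j e_j`, a vanishing `f e_{s+1}` is an integer relation between
`1, α_1, …, α_s`. -/
lemma TotallyIrrational.linearMap_eq_zero {s : ℕ} {α : Fin s → ℝ} (hα : TotallyIrrational s α)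
    (f : (Fin (s+1) → ℝ) →ₗ[ℝ] ℝ) (hf : ∀ y ∈ Lam s α, ∃ n : ℤ, f y = n)
    (hlast : f (Pi.single (Fin.last s) 1) = 0) : f = 0 := by
  choose n hn using fun j => hf _ (single_castSucc_mem_Lam s α j)
  obtain ⟨n₀, hn₀⟩ := hf _ (alphaExt_mem_Lam s α)
  have hrel : (∑ j, ((-n j : ℤ) : ℝ) * α j) + (n₀ : ℝ) = 0 := by
    rw [single_last_eq_alphaExt_sub s α, map_sub, map_sum, hn₀] at hlast
    simp only [map_smul, hn, smul_eq_mul] at hlast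
    simp only [Int.cast_neg, neg_mul, Finset.sum_neg_distrib]
    linarith [Finset.sum_congr rfl fun j (_ : j ∈ Finset.univ) => mul_comm (α j) (n j : ℝ)]
  obtain ⟨hn_zero, -⟩ := hα _ _ hrel
  refine (Pi.basisFun ℝ (Fin (s+1))).ext fun j => ?_
  refine Fin.lastCases ?_ (fun j => ?_) j
  · simpa using hlast
  · simpa [hn] using congrFun hn_zero j

section SpecialBasis

variable {s : ℕ} {α : Fin s → ℝ} {v : Fin (s+1) → (Fin (s+1) → ℝ)}

lemma top_le_span_range_of_zSpanSet_eq_Lam (hz : zSpanSet v = Lam s α) :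
    ⊤ ≤ Submodule.span ℝ (Set.range v) := by
  rw [← span_Lam_eq_top s α, Submodule.span_le, ← hz]
  rintro _ ⟨c, rfl⟩
  exact Submodule.sum_mem _ fun i _ =>
    Submodule.smul_mem _ _ (Submodule.subset_span (Set.mem_range_self i))

def basisOfZSpanSetEqLam (hz : zSpanSet v = Lam s α) :
    Module.Basis (Fin (s+1)) ℝ (Fin (s+1) → ℝ) :=
  Module.Basis.mk
    (linearIndependent_of_top_le_span_of_card_eq_finrank
      (top_le_span_range_of_zSpanSet_eq_Lam hz) (by simp))
    (top_le_span_range_of_zSpanSet_eq_Lam hz)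

@[simp]
lemma coe_basisOfZSpanSetEqLam (hz : zSpanSet v = Lam s α) :
    ⇑(basisOfZSpanSetEqLam hz) = v :=
  Module.Basis.coe_mk _ _

/-- The last coordinate functional of the basis `v` is integral on `Λ` and nonzero, so it does
not vanish on `e_{s+1}`, which spans the kernel of `φ`. -/
lemma linearIndependent_phiProj_castSucc (hα : TotallyIrrational s α)
    (hz : zSpanSet v = Lam s α) :
    LinearIndependent ℝ (fun i : Fin s => phiProj s (v i.castSucc)) := by
  set B := basisOfZSpanSetEqLam hz
  set f := B.coord (Fin.last s)
  have hfv : ∀ i, f (v i) = if i = Fin.last s then 1 else 0 := fun i => by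
    rw [← coe_basisOfZSpanSetEqLam hz, Module.Basis.coord_apply, Module.Basis.repr_self,
      Finsupp.single_apply]
  have hf_int : ∀ y ∈ Lam s α, ∃ n : ℤ, f y = n := by
    rw [← hz]
    rintro _ ⟨c, rfl⟩
    exact ⟨c (Fin.last s), by simp [map_sum, hfv]⟩
  have hf_last : f (Pi.single (Fin.last s) 1) ≠ 0 := fun h => by
    simpa [hfv] using LinearMap.congr_fun (hα.linearMap_eq_zero f hf_int h) (v (Fin.last s))
  rw [Fintype.linearIndependent_iff]
  intro g hg
  set w := ∑ i, g i • v i.castSucc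
  have hφw : phiProj s w = 0 := by
    simpa only [w, phiProj_eq_funLeft, map_sum, map_smul] using hg
  have hw : w = w (Fin.last s) • Pi.single (Fin.last s) 1 := by
    funext i
    refine Fin.lastCases (by simp) (fun i => ?_) i
    have hwi : w i.castSucc = 0 := congrFun hφw i
    simp [hwi, (Fin.castSucc_lt_last i).ne]
  have hw_last : w (Fin.last s) = 0 := by
    have hfw : f w = 0 := by simp [w, map_sum, hfv, (Fin.castSucc_lt_last _).ne]
    rw [hw, map_smul, smul_eq_mul] at hfw
    exact (mul_eq_zero.1 hfw).resolve_right hf_last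
  rw [hw_last, zero_smul] at hw
  exact Fintype.linearIndependent_iff.1
    (B.linearIndependent.comp _ (Fin.castSucc_injective s)) g (by simpa [B] using hw)

end SpecialBasis

lemma exists_int_coords_of_mem {s : ℕ} {α : Fin s → ℝ} {v : Fin (s+1) → (Fin (s+1) → ℝ)}
    (hα : TotallyIrrational s α) (hz : zSpanSet v = Lam s α) {u : Fin s → ℝ}
    (hu : phiProj s (∑ i, u i • v i.castSucc) = phiProj s (v (Fin.last s)))
    {k : ℤ} {y : Fin (s+1) → ℝ} (hyΛ : y ∈ Lam s α) (hyH : y ∈ Hplane s v k)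
    (hyA : phiProj s y ∈ specialRegionOf s v) :
    ∃ m : Fin s → ℤ, y = ∑ i, (m i : ℝ) • v i.castSucc + (k : ℝ) • v (Fin.last s) ∧
      ∀ i, (m i : ℝ) + k * u i ∈ Set.Ico (0 : ℝ) 1 := by
  obtain ⟨r, rfl⟩ := hyH
  rw [← hz] at hyΛ
  obtain ⟨c, hc⟩ := hyΛ
  have hr : r = fun i => (c i.castSucc : ℝ) := by
    funext i
    have := (basisOfZSpanSetEqLam hz).linearIndependent.eq_coords_of_eq
      (f := Fin.snoc r k) (g := fun i => c i) (by simpa [Fin.sum_univ_castSucc] using hc)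
    simpa using this i.castSucc
  subst hr
  refine ⟨fun i => c i.castSucc, rfl, fun i => ?_⟩
  obtain ⟨_, ⟨t, ht, rfl⟩, hyt⟩ := hyA
  rw [(linearIndependent_phiProj_castSucc hα hz).eq_coords_of_eq
    (f := fun i => (c i.castSucc : ℝ) + k * u i) (g := t) ?_ i]
  · exact ht i
  simp only [phiProj_eq_funLeft, map_add, map_sum, map_smul] at hu hyt ⊢
  rw [hyt, ← hu, Finset.smul_sum]
  simp only [add_smul, mul_smul, Finset.sum_add_distrib]

/-- With `x k` the unique point of `Λ ∩ H_k ∩ φ^{-1}(A)`, the last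
coordinates `φ_{s+1}(x_k)` are strictly increasing in `k`. -/
theorem last_coordinates_strictly_increasing
    (s : ℕ) (α : Fin s → ℝ) (hα : TotallyIrrational s α)
    (v : Fin (s+1) → (Fin (s+1) → ℝ)) (hv : IsSpecialBasis s α v)
    (x : ℤ → (Fin (s+1) → ℝ))
    (hx : ∀ k : ℤ, x k ∈ Lam s α ∧ x k ∈ Hplane s v k ∧
      phiProj s (x k) ∈ specialRegionOf s v) :
    ∀ k : ℤ, x k (Fin.last s) < x (k+1) (Fin.last s) := by
  obtain ⟨⟨_, ⟨u, hu, rfl⟩, hvu⟩, hz, hS4⟩ := hv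
  intro k
  obtain ⟨m, hm, hmu⟩ := exists_int_coords_of_mem hα hz hvu (hx k).1 (hx k).2.1 (hx k).2.2
  obtain ⟨m', hm', hmu'⟩ :=
    exists_int_coords_of_mem hα hz hvu (hx (k+1)).1 (hx (k+1)).2.1 (hx (k+1)).2.2
  have hd : ∀ i ∈ Finset.univ, (m' - m) i = 0 ∨ (m' - m) i = -1 := fun i _ =>
    Int.eq_zero_or_eq_neg_one_of_eq_sub_sub (hmu i) (hmu' i) (hu i)
      (by push_cast [Pi.sub_apply]; ring)
  have hstep : x (k+1) (Fin.last s) - x k (Fin.last s)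
      = v (Fin.last s) (Fin.last s) + ∑ i, ((m' - m) i : ℝ) * v i.castSucc (Fin.last s) := by
    simp only [hm, hm', Pi.add_apply, Finset.sum_apply, Pi.smul_apply, smul_eq_mul,
      Pi.sub_apply, Int.cast_sub, sub_mul, Finset.sum_sub_distrib]
    push_cast
    ring
  rw [Finset.sum_intCast_mul_eq_neg_sum_filter _ _ _ hd] at hstep
  linarith [hS4 (Finset.univ.filter ((m' - m) · = -1))]

end
end
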